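/- arXiv:1610.03715 — 4 statements merged into one kernel-verified Lean document; each statement's English description precedes it below -/
import Mathlib

section
/- Let H, μ > 0 and suppose the belief λ̃(t) in the withhold region is λ̃(t) = α·e^(-2Ht₁-H(t-t₁))·g(t-t₁) / (α·e^(-2Ht₁-H(t-t₁))·g(t-t₁) + 1 - α), where g(τ) = e^(-Hτ) + ∫₀^τ H·e^(-sH)·e^(-(τ-s)μ) ds. Then λ̃(t) is strictly decreasing in t for t ≥ t₁. -/
/-!
Writing `τ = t - t₁`, the belief is the Bayes posterior `α L / (α L + 1 - α)`, which is strictly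
increasing in the likelihood `L = e^(-2Ht₁ - Hτ) g(τ)`. Factoring `e^(-μτ)` out of the convolution
integral and differentiating gives `g'(τ) = -μ ∫₀^τ H e^(-sH) e^(-(τ-s)μ) ds ≤ 0`, the `H e^(-Hτ)`
terms cancelling. Hence `L` is a strictly decreasing positive exponential times a positive
nonincreasing function.
-/

open Real Set

theorem StrictAntiOn.mul_antitoneOn_of_pos {α R : Type*} [Preorder α] [Semiring R] [PartialOrder R]
    [IsStrictOrderedRing R] {f g : α → R} {s : Set α} (hf : StrictAntiOn f s) (hg : AntitoneOn g s)
    (hf₀ : ∀ x ∈ s, 0 ≤ f x) (hg₀ : ∀ x ∈ s, 0 < g x) : StrictAntiOn (f * g) s :=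
  fun a ha b hb hab => calc
    f b * g b ≤ f b * g a := mul_le_mul_of_nonneg_left (hg ha hb hab.le) (hf₀ b hb)
    _ < f a * g a := mul_lt_mul_of_pos_right (hf ha hb hab) (hg₀ a ha)

theorem strictMonoOn_bayes_posterior {α : ℝ} (hα : α ∈ Ioo (0 : ℝ) 1) :
    StrictMonoOn (fun L : ℝ => α * L / (α * L + 1 - α)) (Ioi 0) := by
  intro x (hx : 0 < x) y (hy : 0 < y) hxy
  obtain ⟨hα₀, hα₁⟩ := hα
  have hαx := mul_pos hα₀ hx
  have hαy := mul_pos hα₀ hy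
  rw [div_lt_div_iff₀ (by linarith) (by linarith)]
  nlinarith [mul_lt_mul_of_pos_left hxy hα₀]

noncomputable def twoStageSurvival (H μ τ : ℝ) : ℝ :=
  exp (-H * τ) + ∫ s in (0 : ℝ)..τ, H * exp (-s * H) * exp (-(τ - s) * μ)

theorem integral_exp_mul_exp_sub (H μ τ : ℝ) :
    ∫ s in (0 : ℝ)..τ, H * exp (-s * H) * exp (-(τ - s) * μ)
      = exp (-μ * τ) * ∫ s in (0 : ℝ)..τ, H * exp ((μ - H) * s) := by
  rw [← intervalIntegral.integral_const_mul]
  refine intervalIntegral.integral_congr fun s _ => ?_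
  rw [mul_left_comm, mul_assoc, ← exp_add, ← exp_add]
  ring_nf

theorem integral_exp_mul_exp_sub_nonneg {H : ℝ} (μ : ℝ) (hH : 0 ≤ H) {τ : ℝ} (hτ : 0 ≤ τ) :
    0 ≤ ∫ s in (0 : ℝ)..τ, H * exp (-s * H) * exp (-(τ - s) * μ) :=
  intervalIntegral.integral_nonneg hτ fun _ _ => by positivity

theorem hasDerivAt_twoStageSurvival (H μ τ : ℝ) :
    HasDerivAt (twoStageSurvival H μ)
      (-μ * ∫ s in (0 : ℝ)..τ, H * exp (-s * H) * exp (-(τ - s) * μ)) τ := by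
  have hI : HasDerivAt (fun τ => ∫ s in (0 : ℝ)..τ, H * exp ((μ - H) * s))
      (H * exp ((μ - H) * τ)) τ :=
    ((by fun_prop : Continuous fun s => H * exp ((μ - H) * s)).integral_hasStrictDerivAt
      0 τ).hasDerivAt
  have hexp (c : ℝ) : HasDerivAt (fun τ => exp (c * τ)) (exp (c * τ) * c) τ := by
    simpa using ((hasDerivAt_id τ).const_mul c).exp
  have hcancel : exp (-μ * τ) * (H * exp ((μ - H) * τ)) = H * exp (-H * τ) := by
    rw [mul_left_comm, ← exp_add]; ring_nf
  have hfactor : twoStageSurvival H μ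
      = fun τ => exp (-H * τ) + exp (-μ * τ) * ∫ s in (0 : ℝ)..τ, H * exp ((μ - H) * s) :=
    funext fun τ => by rw [twoStageSurvival, integral_exp_mul_exp_sub]
  rw [hfactor, integral_exp_mul_exp_sub]
  exact ((hexp (-H)).add ((hexp (-μ)).mul hI)).congr_deriv (by rw [hcancel]; ring)

theorem twoStageSurvival_antitoneOn {H μ : ℝ} (hH : 0 ≤ H) (hμ : 0 ≤ μ) :
    AntitoneOn (twoStageSurvival H μ) (Ici 0) := by
  refine antitoneOn_of_deriv_nonpos (convex_Ici 0)
    (fun τ _ => (hasDerivAt_twoStageSurvival H μ τ).continuousAt.continuousWithinAt)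
    (fun τ _ => (hasDerivAt_twoStageSurvival H μ τ).differentiableAt.differentiableWithinAt)
    fun τ hτ => ?_
  rw [interior_Ici] at hτ
  rw [(hasDerivAt_twoStageSurvival H μ τ).deriv, neg_mul]
  exact neg_nonpos.mpr (mul_nonneg hμ (integral_exp_mul_exp_sub_nonneg μ hH hτ.out.le))

theorem twoStageSurvival_pos {H : ℝ} (μ : ℝ) (hH : 0 ≤ H) {τ : ℝ} (hτ : 0 ≤ τ) :
    0 < twoStageSurvival H μ τ :=
  add_pos_of_pos_of_nonneg (exp_pos _) (integral_exp_mul_exp_sub_nonneg μ hH hτ)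

theorem belief_strict_anti_withhold_general (H μ α t₁ : ℝ) (hH : 0 < H) (hμ : 0 < μ)
    (hα : α ∈ Set.Ioo (0:ℝ) 1)
    (g : ℝ → ℝ)
    (hg : ∀ τ : ℝ, g τ = Real.exp (-H * τ)
        + ∫ s in (0:ℝ)..τ, H * Real.exp (-s * H) * Real.exp (-(τ - s) * μ)) :
    StrictAntiOn (fun t : ℝ =>
      α * Real.exp (-2 * H * t₁ - H * (t - t₁)) * g (t - t₁) /
        (α * Real.exp (-2 * H * t₁ - H * (t - t₁)) * g (t - t₁) + 1 - α))
      (Set.Ici t₁) := by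
  obtain rfl : g = twoStageSurvival H μ := funext hg
  have hdecay : StrictAntiOn (fun t => exp (-2 * H * t₁ - H * (t - t₁))) (Ici t₁) :=
    fun a _ b _ hab => exp_lt_exp.mpr (by nlinarith)
  have hsurv : AntitoneOn (fun t => twoStageSurvival H μ (t - t₁)) (Ici t₁) :=
    fun a (ha : t₁ ≤ a) b (hb : t₁ ≤ b) hab => twoStageSurvival_antitoneOn hH.le hμ.le
      (sub_nonneg.mpr ha) (sub_nonneg.mpr hb) (sub_le_sub_right hab t₁)
  have hsurv₀ (t : ℝ) (ht : t ∈ Ici t₁) : 0 < twoStageSurvival H μ (t - t₁) :=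
    twoStageSurvival_pos μ hH.le (sub_nonneg.mpr ht)
  simp only [mul_assoc α]
  exact (strictMonoOn_bayes_posterior hα).comp_strictAntiOn
    (hdecay.mul_antitoneOn_of_pos hsurv (fun _ _ => (exp_pos _).le) hsurv₀)
    fun t ht => mul_pos (exp_pos _) (hsurv₀ t ht)

theorem belief_strict_anti_withhold (H μ α t₁ : ℝ) (hH : 0 < H) (hμ : 0 < μ)
    (hα : α ∈ Set.Ioo (0:ℝ) 1) (ht₁ : 0 ≤ t₁)
    (g : ℝ → ℝ)
    (hg : ∀ τ : ℝ, g τ = Real.exp (-H * τ)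
        + ∫ s in (0:ℝ)..τ, H * Real.exp (-s * H) * Real.exp (-(τ - s) * μ)) :
    StrictAntiOn (fun t : ℝ =>
      α * Real.exp (-2 * H * t₁ - H * (t - t₁)) * g (t - t₁) /
        (α * Real.exp (-2 * H * t₁ - H * (t - t₁)) * g (t - t₁) + 1 - α))
      (Set.Ici t₁) :=
  belief_strict_anti_withhold_general H μ α t₁ hH hμ hα g hg
end

section
/- For H, μ > 0 with H ≠ μ, p₁, p₂ > 0, and t₁ ≥ 0, the function f(t) = H·[ (p₁+p₂)/2 + ((p₁+p₂)/2) / (1 + (H/(μ-H))·(1 - e^((H-μ)(t-t₁))) ) ] is strictly decreasing in t for t > t₁. -/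
/-! Since `H / (μ - H) * (1 - e^{(H-μ)s}) = H * (e^{(H-μ)s} - 1) / (H - μ) = H ∫₀ˢ e^{(H-μ)u} du`,
the denominator is `1` plus a strictly increasing function of `t` vanishing at `t₁`; it is thus
positive and strictly increasing on `t > t₁`, and `f` strictly decreasing. -/

open Real Set

lemma strictMono_exp_mul_sub_one_div {c : ℝ} (hc : c ≠ 0) :
    StrictMono fun s : ℝ => (exp (c * s) - 1) / c := by
  intro a b hab
  rcases hc.lt_or_gt with hc | hc
  · have : exp (c * b) < exp (c * a) := exp_lt_exp.2 (mul_lt_mul_of_neg_left hab hc)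
    exact (div_lt_div_right_of_neg hc).2 (by linarith)
  · have : exp (c * a) < exp (c * b) := exp_lt_exp.2 (mul_lt_mul_of_pos_left hab hc)
    exact div_lt_div_of_pos_right (by linarith) hc

lemma exp_mul_sub_one_div_pos {c s : ℝ} (hc : c ≠ 0) (hs : 0 < s) :
    0 < (exp (c * s) - 1) / c := by
  simpa using strictMono_exp_mul_sub_one_div hc hs

lemma div_sub_mul_one_sub (H μ x : ℝ) : H / (μ - H) * (1 - x) = H * ((x - 1) / (H - μ)) := by
  rw [← neg_sub H μ, div_neg]
  ring

lemma StrictMonoOn.strictAntiOn_const_div {D : ℝ → ℝ} {s : Set ℝ} {A : ℝ}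
    (hD : StrictMonoOn D s) (hD₀ : ∀ x ∈ s, 0 < D x) (hA : 0 < A) :
    StrictAntiOn (fun x => A / D x) s :=
  fun _ ha _ hb hab => div_lt_div_of_pos_left hA (hD₀ _ ha) (hD ha hb hab)

theorem exit_rhs_strict_anti_general (H μ p₁ p₂ t₁ : ℝ) (hH : 0 < H) (hne : H ≠ μ)
    (hp₁ : 0 < p₁) (hp₂ : 0 < p₂) :
    StrictAntiOn (fun t : ℝ =>
      H * ((p₁ + p₂) / 2 +
        ((p₁ + p₂) / 2) / (1 + (H / (μ - H)) * (1 - Real.exp ((H - μ) * (t - t₁))))))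
      (Set.Ioi t₁) := by
  have hc : H - μ ≠ 0 := sub_ne_zero.2 hne
  set D : ℝ → ℝ := fun t => 1 + H * ((exp ((H - μ) * (t - t₁)) - 1) / (H - μ))
  have hD : StrictMonoOn D (Ioi t₁) := fun a _ b _ hab => by
    have := strictMono_exp_mul_sub_one_div hc (sub_lt_sub_right hab t₁)
    simp only [D]
    gcongr
  have hD₀ : ∀ t ∈ Ioi t₁, 0 < D t := fun t ht => by
    have := exp_mul_sub_one_div_pos hc (sub_pos.2 ht)
    positivity
  have hA : 0 < (p₁ + p₂) / 2 := by positivity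
  simp only [div_sub_mul_one_sub]
  intro a ha b hb hab
  have := hD.strictAntiOn_const_div hD₀ hA ha hb hab
  simp only [D] at this
  dsimp only
  gcongr

theorem exit_rhs_strict_anti (H μ p₁ p₂ t₁ : ℝ) (hH : 0 < H) (hμ : 0 < μ) (hne : H ≠ μ)
    (hp₁ : 0 < p₁) (hp₂ : 0 < p₂) (ht₁ : 0 ≤ t₁) :
    StrictAntiOn (fun t : ℝ =>
      H * ((p₁ + p₂) / 2 +
        ((p₁ + p₂) / 2) / (1 + (H / (μ - H)) * (1 - Real.exp ((H - μ) * (t - t₁))))))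
      (Set.Ioi t₁) :=
  exit_rhs_strict_anti_general H μ p₁ p₂ t₁ hH hne hp₁ hp₂
end

section
/- For H, μ > 0 with H ≠ μ and t₁ ≥ 0, the numerator of the continuation value, namely N(t) = H(p₁+p₂)·e^(-H(t-t₁))·[ -(H/2)/(H-μ) + ((H/2)/(H-μ))·e^((H-μ)(t-t₁)) + (H/2+μ)/(H+μ) + ((H/2)/(H+μ))·e^(-(H+μ)(t₂-t)) ], is strictly decreasing in t on (t₁, t₂), given p₁, p₂ > 0 and t₂ > t₁. -/
/-! Writing `s = t - t₁`, the derivative of `N` is `-H (p₁ + p₂) e^{-H s} (H μ / 2)` times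
`(e^{(H-μ) s} - 1)/(H - μ) + (e^{-(H+μ)(t₂-t)} - 1)/(-(H+μ))`. Both summands have the form
`(e^{a x} - 1)/a` with `a ≠ 0` and `x > 0`, which is always positive since `e^{a x} - 1` has the
sign of `a`; hence `N' < 0` on `(t₁, t₂)`. -/

open Real

lemma exp_mul_sub_one_div_pos_s9 {a x : ℝ} (ha : a ≠ 0) (hx : 0 < x) :
    0 < (exp (a * x) - 1) / a := by
  rcases ha.lt_or_gt with ha | ha
  · exact div_pos_of_neg_of_neg (sub_neg.2 (exp_lt_one_iff.2 (mul_neg_of_neg_of_pos ha hx))) ha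
  · exact div_pos (sub_pos.2 (one_lt_exp_iff.2 (mul_pos ha hx))) ha

noncomputable def continuationNumerator (H μ p t₁ t₂ t : ℝ) : ℝ :=
  H * p * exp (-H * (t - t₁)) *
    (-(H / 2) / (H - μ) + ((H / 2) / (H - μ)) * exp ((H - μ) * (t - t₁))
      + (H / 2 + μ) / (H + μ)
      + ((H / 2) / (H + μ)) * exp (-(H + μ) * (t₂ - t)))

lemma hasDerivAt_continuationNumerator {H μ : ℝ} (hsub : H - μ ≠ 0) (hadd : H + μ ≠ 0)
    (p t₁ t₂ t : ℝ) :
    HasDerivAt (continuationNumerator H μ p t₁ t₂)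
      (-(H * p * exp (-H * (t - t₁)) * (H * μ / 2)) *
        ((exp ((H - μ) * (t - t₁)) - 1) / (H - μ)
          + (exp (-(H + μ) * (t₂ - t)) - 1) / (-(H + μ)))) t := by
  have hlin : ∀ c d : ℝ, HasDerivAt (fun t => c * (t - d)) c t := fun c d => by
    simpa using ((hasDerivAt_id t).sub_const d).const_mul c
  have hrev : HasDerivAt (fun t => -(H + μ) * (t₂ - t)) (H + μ) t := by
    simpa using ((hasDerivAt_id t).const_sub t₂).const_mul (-(H + μ))
  have hgrowth := ((hlin (H - μ) t₁).exp.const_mul ((H / 2) / (H - μ))).const_add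
    (-(H / 2) / (H - μ))
  have h := ((hlin (-H) t₁).exp.const_mul (H * p)).mul
    ((hgrowth.add_const ((H / 2 + μ) / (H + μ))).add (hrev.exp.const_mul ((H / 2) / (H + μ))))
  refine h.congr_deriv ?_
  simp only [Pi.add_apply]
  field_simp
  ring

theorem continuation_numerator_strict_anti_general (H μ p₁ p₂ t₁ t₂ : ℝ)
    (hH : 0 < H) (hμ : 0 < μ) (hne : H ≠ μ)
    (hp₁ : 0 < p₁) (hp₂ : 0 < p₂) :
    StrictAntiOn (fun t : ℝ =>
      H * (p₁ + p₂) * Real.exp (-H * (t - t₁)) *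
        (-(H / 2) / (H - μ) + ((H / 2) / (H - μ)) * Real.exp ((H - μ) * (t - t₁))
          + (H / 2 + μ) / (H + μ)
          + ((H / 2) / (H + μ)) * Real.exp (-(H + μ) * (t₂ - t))))
      (Set.Ioo t₁ t₂) := by
  have hsub : H - μ ≠ 0 := sub_ne_zero.2 hne
  have hadd : 0 < H + μ := add_pos hH hμ
  have hN := hasDerivAt_continuationNumerator hsub hadd.ne' (p₁ + p₂) t₁ t₂
  show StrictAntiOn (continuationNumerator H μ (p₁ + p₂) t₁ t₂) _
  refine strictAntiOn_of_deriv_neg (convex_Ioo t₁ t₂)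
    (fun t _ => (hN t).continuousAt.continuousWithinAt) fun t hmem => ?_
  rw [interior_Ioo] at hmem
  rw [(hN t).deriv]
  have hfactor : 0 < H * (p₁ + p₂) * exp (-H * (t - t₁)) * (H * μ / 2) := by positivity
  have hbracket := add_pos (exp_mul_sub_one_div_pos_s9 hsub (sub_pos.2 hmem.1))
    (exp_mul_sub_one_div_pos_s9 (neg_ne_zero.2 hadd.ne') (sub_pos.2 hmem.2))
  exact mul_neg_of_neg_of_pos (neg_neg_of_pos hfactor) hbracket

theorem continuation_numerator_strict_anti (H μ p₁ p₂ t₁ t₂ : ℝ)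
    (hH : 0 < H) (hμ : 0 < μ) (hne : H ≠ μ)
    (hp₁ : 0 < p₁) (hp₂ : 0 < p₂) (ht₁ : 0 ≤ t₁) (ht : t₁ < t₂) :
    StrictAntiOn (fun t : ℝ =>
      H * (p₁ + p₂) * Real.exp (-H * (t - t₁)) *
        (-(H / 2) / (H - μ) + ((H / 2) / (H - μ)) * Real.exp ((H - μ) * (t - t₁))
          + (H / 2 + μ) / (H + μ)
          + ((H / 2) / (H + μ)) * Real.exp (-(H + μ) * (t₂ - t))))
      (Set.Ioo t₁ t₂) :=
  continuation_numerator_strict_anti_general H μ p₁ p₂ t₁ t₂ hH hμ hne hp₁ hp₂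
end

section
/- Let H, μ > 0 with H ≠ μ, α ∈ (0,1), t₁ ≥ 0, and suppose ((1-α)/α)·e^(2Ht₁) ≥ 1. Then D(t) = (-μ/(H-μ))·e^(H(t₁-t)) + (H/(H-μ))·e^(μ(t₁-t)) + ((1-α)/α)·e^(2Ht₁+H(t-t₁)) is strictly increasing in t for t > t₁. -/
/-!
Put `u = t - t₁` and `C = (1 - α) / α`. Then `D'(t) = H (C e^{2Ht₁} e^{Hu} - μ I(u))`, where
`I(u) = ∫₀ᵘ e^{-Hs} e^{-μ(u-s)} ds = (e^{-Hu} - e^{-μu}) / (μ - H)` is the convolution in the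
integral form of `D`. Bounding `e^{-Hs} ≤ 1` gives `μ I(u) ≤ 1 - e^{-μu} < 1`, while the hypothesis
makes the first term at least `1`.
-/

open Real Set intervalIntegral

lemma integral_exp_mul_exp_sub_s11 (a b u : ℝ) (hab : a ≠ b) :
    ∫ s in (0)..u, exp (-(a * s)) * exp (-(b * (u - s)))
      = (exp (-(a * u)) - exp (-(b * u))) / (b - a) := by
  have hba : b - a ≠ 0 := sub_ne_zero.mpr hab.symm
  have hderiv : ∀ s, HasDerivAt (fun s => exp ((b - a) * s - b * u) / (b - a))
      (exp (-(a * s)) * exp (-(b * (u - s)))) s := by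
    intro s
    refine ((((hasDerivAt_id' s).const_mul (b - a)).sub_const (b * u)).exp.div_const
      (b - a)).congr_deriv ?_
    rw [← exp_add]
    field_simp
    ring_nf
  rw [integral_eq_sub_of_hasDerivAt (fun s _ => hderiv s)
    (Continuous.intervalIntegrable (by fun_prop) _ _)]
  ring_nf

lemma mul_exp_sub_exp_div_sub_lt_one {H μ u : ℝ} (hH : 0 ≤ H) (hμ : 0 < μ) (hne : H ≠ μ)
    (hu : 0 ≤ u) : μ * ((exp (-(H * u)) - exp (-(μ * u))) / (μ - H)) < 1 := by
  have hle : ∫ s in (0)..u, exp (-(H * s)) * exp (-(μ * (u - s)))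
      ≤ ∫ s in (0)..u, exp (-(0 * s)) * exp (-(μ * (u - s))) :=
    integral_mono_on hu (Continuous.intervalIntegrable (by fun_prop) _ _)
      (Continuous.intervalIntegrable (by fun_prop) _ _) fun s hs => by
        gcongr
        nlinarith [hs.1]
  rw [integral_exp_mul_exp_sub_s11 H μ u hne, integral_exp_mul_exp_sub_s11 0 μ u hμ.ne] at hle
  calc μ * ((exp (-(H * u)) - exp (-(μ * u))) / (μ - H))
      ≤ μ * ((exp (-(0 * u)) - exp (-(μ * u))) / (μ - 0)) := by gcongr
    _ = 1 - exp (-(μ * u)) := by simp only [zero_mul, neg_zero, exp_zero, sub_zero]; field_simp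
    _ < 1 := sub_lt_self 1 (exp_pos _)

noncomputable def continuationDenominator (H μ C t₁ t : ℝ) : ℝ :=
  (-μ / (H - μ)) * exp (H * (t₁ - t)) + (H / (H - μ)) * exp (μ * (t₁ - t))
    + C * exp (2 * H * t₁ + H * (t - t₁))

lemma hasDerivAt_continuationDenominator {H μ : ℝ} (C t₁ t : ℝ) (hne : H ≠ μ) :
    HasDerivAt (continuationDenominator H μ C t₁)
      (H * (C * exp (2 * H * t₁ + H * (t - t₁))
        - μ * ((exp (-(H * (t - t₁))) - exp (-(μ * (t - t₁)))) / (μ - H)))) t := by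
  have hlin : ∀ k : ℝ, HasDerivAt (fun t => k * (t₁ - t)) (-k) t := fun k => by
    simpa using ((hasDerivAt_id t).const_sub t₁).const_mul k
  have hgrowth : HasDerivAt (fun t => 2 * H * t₁ + H * (t - t₁)) H t := by
    simpa using (((hasDerivAt_id t).sub_const t₁).const_mul H).const_add (2 * H * t₁)
  refine ((((hlin H).exp.const_mul _).add ((hlin μ).exp.const_mul _)).add
    (hgrowth.exp.const_mul C)).congr_deriv ?_
  rw [show H * (t₁ - t) = -(H * (t - t₁)) by ring, show μ * (t₁ - t) = -(μ * (t - t₁)) by ring]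
  field_simp
  ring

theorem continuation_denominator_strict_mono_general (H μ α t₁ : ℝ)
    (hH : 0 < H) (hμ : 0 < μ) (hne : H ≠ μ)
    (hcond : ((1 - α) / α) * Real.exp (2 * H * t₁) ≥ 1) :
    StrictMonoOn (fun t : ℝ =>
      (-μ / (H - μ)) * Real.exp (H * (t₁ - t)) + (H / (H - μ)) * Real.exp (μ * (t₁ - t))
        + ((1 - α) / α) * Real.exp (2 * H * t₁ + H * (t - t₁)))
      (Set.Ioi t₁) := by
  show StrictMonoOn (continuationDenominator H μ ((1 - α) / α) t₁) (Ioi t₁)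
  set C := (1 - α) / α
  have hC : 0 < C := pos_of_mul_pos_left (one_pos.trans_le hcond) (exp_pos _).le
  have hderiv := fun t => hasDerivAt_continuationDenominator C t₁ t hne
  refine strictMonoOn_of_deriv_pos (convex_Ioi t₁)
    (fun t _ => (hderiv t).continuousAt.continuousWithinAt) fun t ht => ?_
  rw [interior_Ioi, mem_Ioi] at ht
  rw [(hderiv t).deriv]
  have hbound := mul_exp_sub_exp_div_sub_lt_one hH.le hμ hne (sub_pos.mpr ht).le
  have hlarge : 1 ≤ C * exp (2 * H * t₁ + H * (t - t₁)) :=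
    hcond.trans (by gcongr; nlinarith [sub_pos.mpr ht])
  exact mul_pos hH (by linarith)

theorem continuation_denominator_strict_mono (H μ α t₁ : ℝ)
    (hH : 0 < H) (hμ : 0 < μ) (hne : H ≠ μ) (hα : α ∈ Set.Ioo (0:ℝ) 1) (ht₁ : 0 ≤ t₁)
    (hcond : ((1 - α) / α) * Real.exp (2 * H * t₁) ≥ 1) :
    StrictMonoOn (fun t : ℝ =>
      (-μ / (H - μ)) * Real.exp (H * (t₁ - t)) + (H / (H - μ)) * Real.exp (μ * (t₁ - t))
        + ((1 - α) / α) * Real.exp (2 * H * t₁ + H * (t - t₁)))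
      (Set.Ioi t₁) :=
  continuation_denominator_strict_mono_general H μ α t₁ hH hμ hne hcond
end
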